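/- Let m, v ∈ ℝ³ with |m| = 1 and m · v = 0, and let k > 0. Define m⁺ = (m + k v)/|m + k v|. Then |m⁺ − m − k v| ≤ (1/2) k² |v|². -/

import Mathlib

open RealInnerProductSpace

/-! Since `m ⊥ v` and `|m| = 1`, Pythagoras gives `|m + k v|² = 1 + k² |v|² ≥ 1`. Normalising a
vector `u` with `|u| ≥ 1` moves it by exactly `|u| - 1`, and
`x² = 1 + t` forces `x ≤ 1 + t / 2` since `(x - 1)² ≥ 0`. -/

theorem norm_inv_norm_smul_sub_self {E : Type*} [NormedAddCommGroup E] [NormedSpace ℝ E]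
    {u : E} (hu : u ≠ 0) : ‖‖u‖⁻¹ • u - u‖ = |1 - ‖u‖| := by
  have hnorm : ‖u‖ ≠ 0 := norm_ne_zero_iff.mpr hu
  calc ‖‖u‖⁻¹ • u - u‖ = |‖u‖⁻¹ - 1| * ‖u‖ := by
        rw [← Real.norm_eq_abs, ← norm_smul, sub_smul, one_smul]
    _ = |(‖u‖⁻¹ - 1) * ‖u‖| := by rw [abs_mul, abs_norm]
    _ = |1 - ‖u‖| := by rw [sub_mul, inv_mul_cancel₀ hnorm, one_mul]

theorem sub_one_le_half_of_sq_eq_one_add {x t : ℝ} (hsq : x ^ 2 = 1 + t) : x - 1 ≤ t / 2 := by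
  nlinarith [sq_nonneg (x - 1)]

theorem norm_normalize_add_sub_le {F : Type*} [NormedAddCommGroup F] [InnerProductSpace ℝ F]
    {m w : F} (hm : ‖m‖ = 1) (horth : ⟪m, w⟫ = 0) :
    ‖‖m + w‖⁻¹ • (m + w) - (m + w)‖ ≤ ‖w‖ ^ 2 / 2 := by
  have hsq : ‖m + w‖ ^ 2 = 1 + ‖w‖ ^ 2 := by
    rw [sq, sq, norm_add_sq_eq_norm_sq_add_norm_sq_real horth, hm, one_mul]
  have hge : 1 ≤ ‖m + w‖ := by
    nlinarith [norm_nonneg (m + w), sq_nonneg ‖w‖]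
  have hne : m + w ≠ 0 := norm_pos_iff.mp (one_pos.trans_le hge)
  rw [norm_inv_norm_smul_sub_self hne, abs_of_nonpos (sub_nonpos.mpr hge), neg_sub]
  exact sub_one_le_half_of_sq_eq_one_add hsq

theorem projection_step_second_estimate_general (m v : EuclideanSpace ℝ (Fin 3)) (k : ℝ)
    (hm : ‖m‖ = 1) (horth : ⟪m, v⟫ = 0) :
    ‖(‖m + k • v‖⁻¹) • (m + k • v) - m - k • v‖ ≤ 1 / 2 * k ^ 2 * ‖v‖ ^ 2 := by
  have horth' : ⟪m, k • v⟫ = 0 := by rw [inner_smul_right, horth, mul_zero]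
  have hnorm : ‖k • v‖ ^ 2 = k ^ 2 * ‖v‖ ^ 2 := by
    rw [norm_smul, mul_pow, Real.norm_eq_abs, sq_abs]
  rw [sub_sub]
  linarith [norm_normalize_add_sub_le hm horth']

/-- Second-order nodewise geometric estimate for the nodal projection: if `|m| = 1`,
`m · v = 0` and `k > 0`, then `m⁺ = (m + k v)/|m + k v|` satisfies
`|m⁺ − m − k v| ≤ (1/2) k² |v|²`. -/
theorem projection_step_second_estimate (m v : EuclideanSpace ℝ (Fin 3)) (k : ℝ)
    (hm : ‖m‖ = 1) (horth : ⟪m, v⟫ = 0) (hk : 0 < k) :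
    ‖(‖m + k • v‖⁻¹) • (m + k • v) - m - k • v‖ ≤ 1 / 2 * k ^ 2 * ‖v‖ ^ 2 :=
  projection_step_second_estimate_general m v k hm horth
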